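/- Let f: R^d → R be self-concordant with Hessian H_x = ∇²f(x), and let W ∈ R^{d×d} be symmetric. For all y and all x with ‖y − x‖_y < 1/2, the weighted Frobenius norm satisfies ‖W‖_{F(H_y)} ≤ ((1 − ‖y − x‖_y)/(1 − 2‖y − x‖_y))² · ‖W‖_{F(H_x)}. -/

import Mathlib

open Matrix MeasureTheory Filter
open scoped Classical

noncomputable section

/-- Vectors in `ℝ^d` with the Euclidean (2-)norm. -/
abbrev Vec (d : ℕ) := EuclideanSpace ℝ (Fin d)

/-- Matrix square root of a positive semidefinite matrix (junk value `0` otherwise). -/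
noncomputable def msqrt {d : ℕ} (M : Matrix (Fin d) (Fin d) ℝ) : Matrix (Fin d) (Fin d) ℝ :=
  if h : M.PosSemidef then
    (h.1.eigenvectorUnitary : Matrix (Fin d) (Fin d) ℝ) *
      diagonal ((RCLike.ofReal : ℝ → ℝ) ∘ Real.sqrt ∘ h.1.eigenvalues) *
      (star h.1.eigenvectorUnitary : Matrix (Fin d) (Fin d) ℝ)
  else 0

/-- Frobenius norm of a square matrix. -/
noncomputable def frobNorm {d : ℕ} (M : Matrix (Fin d) (Fin d) ℝ) : ℝ :=
  Real.sqrt (Matrix.trace (Mᵀ * M))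

/-- Weighted Frobenius norm `‖W‖_{F(H)} = ‖H^{1/2} W H^{1/2}‖_F`. -/
noncomputable def wFrob {d : ℕ} (H W : Matrix (Fin d) (Fin d) ℝ) : ℝ :=
  frobNorm (msqrt H * W * msqrt H)

/-- Local norm `‖v‖_H = √⟨H v, v⟩`. -/
noncomputable def localNorm {d : ℕ} (H : Matrix (Fin d) (Fin d) ℝ) (v : Vec d) : ℝ :=
  Real.sqrt (inner ℝ (Matrix.toEuclideanLin H v) v : ℝ)

/-- `f` is self-concordant, expressed through its Hessian map `Hf`:
the Hessian is everywhere positive definite and the local norms at nearby points are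
comparable. -/
def SelfConcordant {d : ℕ} (Hf : Vec d → Matrix (Fin d) (Fin d) ℝ) : Prop :=
  (∀ x, (Hf x).PosDef) ∧
  ∀ x y v : Vec d, localNorm (Hf x) (y - x) < 1 → v ≠ 0 →
    1 - localNorm (Hf x) (y - x) ≤ localNorm (Hf y) v / localNorm (Hf x) v ∧
      localNorm (Hf y) v / localNorm (Hf x) v ≤ 1 / (1 - localNorm (Hf x) (y - x))

/-- `g` is the gradient of `f` and `Hf` is its Hessian (the derivative of the gradient). -/
def IsGradHess {d : ℕ} (f : Vec d → ℝ) (g : Vec d → Vec d)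
    (Hf : Vec d → Matrix (Fin d) (Fin d) ℝ) : Prop :=
  (∀ x, HasGradientAt f (g x) x) ∧
  ∀ x, HasFDerivAt g (Matrix.toEuclideanCLM (𝕜 := ℝ) (Hf x) : Vec d →L[ℝ] Vec d) x

/-- Smallest eigenvalue of a symmetric matrix, via the Rayleigh quotient. -/
noncomputable def lambdaMin {d : ℕ} (M : Matrix (Fin d) (Fin d) ℝ) : ℝ :=
  ⨅ v : {v : Vec d // ‖v‖ = 1}, (inner ℝ (Matrix.toEuclideanLin M v.1) v.1 : ℝ)

/-- Entrywise expectation of a random matrix. -/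
noncomputable def expMat {Ω : Type*} [MeasurableSpace Ω] (μ : Measure Ω)
    {m n : ℕ} (M : Ω → Matrix (Fin m) (Fin n) ℝ) : Matrix (Fin m) (Fin n) ℝ :=
  Matrix.of fun i j => ∫ ω, M ω i j ∂μ

/-- The projection matrix `Z = H^{1/2} S (Sᵀ H S)⁻¹ Sᵀ H^{1/2}`. -/
noncomputable def sketchProj {d τ : ℕ} (H : Matrix (Fin d) (Fin d) ℝ)
    (S : Matrix (Fin d) (Fin τ) ℝ) : Matrix (Fin d) (Fin d) ℝ :=
  msqrt H * S * (Sᵀ * H * S)⁻¹ * Sᵀ * msqrt H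

/-- The (randomized) BFGS update
`BFGS(B, H, S) = G + (I - G H) B (I - H G)` with `G = S (Sᵀ H S)⁻¹ Sᵀ`. -/
noncomputable def bfgsUpdate {d τ : ℕ} (B H : Matrix (Fin d) (Fin d) ℝ)
    (S : Matrix (Fin d) (Fin τ) ℝ) : Matrix (Fin d) (Fin d) ℝ :=
  S * (Sᵀ * H * S)⁻¹ * Sᵀ +
    (1 - S * (Sᵀ * H * S)⁻¹ * Sᵀ * H) * B * (1 - H * (S * (Sᵀ * H * S)⁻¹ * Sᵀ))

/-- Spectral (operator 2-)norm of a matrix. -/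
noncomputable def opNorm2 {d : ℕ} (M : Matrix (Fin d) (Fin d) ℝ) : ℝ :=
  ‖(Matrix.toEuclideanCLM (𝕜 := ℝ) M : Vec d →L[ℝ] Vec d)‖

instance matrixMeasurableSpace {m n : Type*} : MeasurableSpace (Matrix m n ℝ) :=
  MeasurableSpace.pi

/-- The sketching matrices `S k` are i.i.d. samples from a common distribution `D`. -/
def IIDSketch {d τ : ℕ} {Ω : Type*} [MeasurableSpace Ω] (μ : Measure Ω)
    (S : ℕ → Ω → Matrix (Fin d) (Fin τ) ℝ) : Prop :=
  (∀ k, Measurable (S k)) ∧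
  ProbabilityTheory.iIndepFun (m := fun _ => matrixMeasurableSpace) S μ ∧
  ∀ k, Measure.map (S k) μ = Measure.map (S 0) μ

end

/-! Write `r = ‖y - x‖_y = ‖x - y‖_y`. The lower self-concordance bound at `y`, applied to the
point `x`, is the Loewner inequality `(1 - r)² H_y ≼ H_x`. Since
`‖W‖²_{F(H)} = tr(Wᵀ H W H)` and `tr(P ·)` is Loewner-monotone for `P ≽ 0`, replacing each of the
two factors `H_y` by `H_x` in turn gives `(1 - r)² ‖W‖_{F(H_y)} ≤ ‖W‖_{F(H_x)}`. Finally
`(1 - r)² ≥ 1 - 2r > 0` makes `((1 - r)/(1 - 2r))² ≥ (1 - r)⁻²`. -/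

section MatrixSqrt

variable {d : ℕ} {M : Matrix (Fin d) (Fin d) ℝ}

lemma msqrt_posSemidef (hM : M.PosSemidef) : (msqrt M).PosSemidef := by
  rw [msqrt, dif_pos hM]
  simpa [Matrix.star_eq_conjTranspose] using
    (PosSemidef.diagonal fun i => by simp [Real.sqrt_nonneg] :
      (diagonal ((RCLike.ofReal : ℝ → ℝ) ∘ Real.sqrt ∘ hM.1.eigenvalues)).PosSemidef
      ).mul_mul_conjTranspose_same (hM.1.eigenvectorUnitary : Matrix (Fin d) (Fin d) ℝ)

lemma msqrt_mul_self (hM : M.PosSemidef) : msqrt M * msqrt M = M := by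
  set U : Matrix (Fin d) (Fin d) ℝ := (hM.1.eigenvectorUnitary : Matrix (Fin d) (Fin d) ℝ)
  set D := diagonal ((RCLike.ofReal : ℝ → ℝ) ∘ Real.sqrt ∘ hM.1.eigenvalues)
  have hUU : star U * U = 1 := Unitary.coe_star_mul_self _
  have hDD : D * D = diagonal ((RCLike.ofReal : ℝ → ℝ) ∘ hM.1.eigenvalues) := by
    simp only [D, diagonal_mul_diagonal]
    congr 1
    funext i
    simp [Real.mul_self_sqrt (hM.eigenvalues_nonneg i)]
  have hspec := hM.1.spectral_theorem
  rw [Unitary.conjStarAlgAut_apply] at hspec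
  calc msqrt M * msqrt M = U * (D * (star U * U) * D) * star U := by
        rw [msqrt, dif_pos hM]; simp only [U, D, Matrix.mul_assoc]
    _ = M := by rw [hUU, Matrix.mul_one, hDD]; exact hspec.symm

lemma transpose_msqrt (hM : M.PosSemidef) : (msqrt M)ᵀ = msqrt M := by
  simpa only [conjTranspose_eq_transpose_of_trivial] using (msqrt_posSemidef hM).isHermitian.eq

end MatrixSqrt

section TraceInequalities

variable {d : ℕ} {A B P : Matrix (Fin d) (Fin d) ℝ}

lemma trace_mul_nonneg_of_posSemidef (hA : A.PosSemidef) (hB : B.PosSemidef) :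
    0 ≤ (A * B).trace := by
  have hsym : (A * B).trace = (msqrt A * B * msqrt A).trace := by
    conv_lhs => rw [← msqrt_mul_self hA]
    rw [Matrix.mul_assoc, Matrix.trace_mul_comm]
  have hpsd := hB.mul_mul_conjTranspose_same (msqrt A)
  rw [(msqrt_posSemidef hA).isHermitian.eq] at hpsd
  exact hsym ▸ hpsd.trace_nonneg

lemma smul_trace_mul_le_of_posSemidef_sub {a : ℝ} (hP : P.PosSemidef)
    (hAB : (B - a • A).PosSemidef) : a * (P * A).trace ≤ (P * B).trace := by
  have h := trace_mul_nonneg_of_posSemidef hP hAB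
  rw [Matrix.mul_sub, Matrix.trace_sub, Matrix.mul_smul, Matrix.trace_smul, smul_eq_mul] at h
  linarith

end TraceInequalities

section WeightedFrobenius

variable {d : ℕ} {H H' : Matrix (Fin d) (Fin d) ℝ}

lemma wFrob_eq_sqrt_trace (hH : H.PosSemidef) (W : Matrix (Fin d) (Fin d) ℝ) :
    wFrob H W = √(Wᵀ * H * W * H).trace := by
  rw [wFrob, frobNorm]
  set s := msqrt H
  have hss : s * s = H := msqrt_mul_self hH
  congr 1
  calc ((s * W * s)ᵀ * (s * W * s)).trace = (s * (Wᵀ * (s * s) * W * s)).trace := by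
        simp only [Matrix.transpose_mul, transpose_msqrt hH, s, Matrix.mul_assoc]
    _ = (Wᵀ * H * W * H).trace := by
        rw [Matrix.trace_mul_comm, hss, Matrix.mul_assoc _ s s, hss]

lemma mul_wFrob_le_of_posSemidef_sub {a : ℝ} (ha : 0 ≤ a) (hH : H.PosSemidef)
    (hH' : H'.PosSemidef) (hHH' : (H' - a • H).PosSemidef) (W : Matrix (Fin d) (Fin d) ℝ) :
    a * wFrob H W ≤ wFrob H' W := by
  have hWtHW : (Wᵀ * H * W).PosSemidef := by
    simpa only [conjTranspose_eq_transpose_of_trivial] using hH.conjTranspose_mul_mul_same W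
  have hWHWt : (W * H' * Wᵀ).PosSemidef := by
    simpa only [conjTranspose_eq_transpose_of_trivial] using hH'.mul_mul_conjTranspose_same W
  have hcycle : (Wᵀ * H * W * H').trace = (W * H' * Wᵀ * H).trace := by
    rw [Matrix.mul_assoc _ W, Matrix.trace_mul_comm, ← Matrix.mul_assoc]
  have hcycle' : (W * H' * Wᵀ * H').trace = (Wᵀ * H' * W * H').trace := by
    rw [Matrix.mul_assoc _ Wᵀ, Matrix.trace_mul_comm, ← Matrix.mul_assoc]
  have htrace : a ^ 2 * (Wᵀ * H * W * H).trace ≤ (Wᵀ * H' * W * H').trace :=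
    calc a ^ 2 * (Wᵀ * H * W * H).trace
        = a * (a * (Wᵀ * H * W * H).trace) := by ring
      _ ≤ a * (W * H' * Wᵀ * H).trace := by
        rw [← hcycle]
        exact mul_le_mul_of_nonneg_left (smul_trace_mul_le_of_posSemidef_sub hWtHW hHH') ha
      _ ≤ (Wᵀ * H' * W * H').trace := by
        rw [← hcycle']
        exact smul_trace_mul_le_of_posSemidef_sub hWHWt hHH'
  rw [wFrob_eq_sqrt_trace hH, wFrob_eq_sqrt_trace hH', ← Real.sqrt_sq ha,
    ← Real.sqrt_mul (sq_nonneg a)]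
  exact Real.sqrt_le_sqrt htrace

end WeightedFrobenius

section LocalNorm

variable {d : ℕ}

lemma localNorm_sub_comm (H : Matrix (Fin d) (Fin d) ℝ) (x y : Vec d) :
    localNorm H (x - y) = localNorm H (y - x) := by
  rw [localNorm, localNorm, ← neg_sub, map_neg, inner_neg_neg]

lemma localNorm_sq {H : Matrix (Fin d) (Fin d) ℝ} (hH : H.PosSemidef) (v : Vec d) :
    localNorm H v ^ 2 = v.ofLp ⬝ᵥ H *ᵥ v.ofLp := by
  have hquad : (inner ℝ (toEuclideanLin H v) v : ℝ) = v.ofLp ⬝ᵥ H *ᵥ v.ofLp := by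
    simp [PiLp.inner_apply, dotProduct, mulVec]
  rw [localNorm, Real.sq_sqrt (hquad ▸ by simpa using hH.dotProduct_mulVec_nonneg v.ofLp), hquad]

lemma SelfConcordant.posSemidef_sub_smul {Hf : Vec d → Matrix (Fin d) (Fin d) ℝ}
    (hsc : SelfConcordant Hf) {x y : Vec d} (hxy : localNorm (Hf x) (y - x) < 1) :
    (Hf y - (1 - localNorm (Hf x) (y - x)) ^ 2 • Hf x).PosSemidef := by
  obtain ⟨hpd, hcomp⟩ := hsc
  set r := localNorm (Hf x) (y - x)
  refine PosSemidef.of_dotProduct_mulVec_nonneg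
    ((hpd y).1.sub ((hpd x).1.smul (IsSelfAdjoint.all _))) fun u => ?_
  rcases eq_or_ne u 0 with rfl | hu
  · simp
  set v : Vec d := WithLp.toLp 2 u
  have hv : v ≠ 0 := fun h => hu (congrArg WithLp.ofLp h)
  have hx_pos : 0 < localNorm (Hf x) v := by
    have hq := (hpd x).dotProduct_mulVec_pos hu
    rw [star_trivial, show u = v.ofLp from rfl, ← localNorm_sq (hpd x).posSemidef] at hq
    exact lt_of_pow_lt_pow_left₀ 2 (Real.sqrt_nonneg _) (by simpa using hq)
  have hratio := (hcomp x y v hxy hv).1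
  rw [le_div_iff₀ hx_pos] at hratio
  have hsq : (1 - r) ^ 2 * localNorm (Hf x) v ^ 2 ≤ localNorm (Hf y) v ^ 2 := by
    rw [← mul_pow]
    exact pow_le_pow_left₀ (mul_nonneg (by linarith) hx_pos.le) hratio 2
  rw [localNorm_sq (hpd x).posSemidef, localNorm_sq (hpd y).posSemidef] at hsq
  simp only [star_trivial, sub_mulVec, smul_mulVec, dotProduct_sub, dotProduct_smul, smul_eq_mul]
  exact sub_nonneg.mpr hsq

end LocalNorm

theorem wfrob_change_of_norm_self_concordant'_general
    {d : ℕ} (Hf : Vec d → Matrix (Fin d) (Fin d) ℝ)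
    (hsc : SelfConcordant Hf)
    (W : Matrix (Fin d) (Fin d) ℝ) :
    ∀ y x : Vec d, localNorm (Hf y) (y - x) < 1 / 2 →
      wFrob (Hf y) W ≤
        ((1 - localNorm (Hf y) (y - x)) / (1 - 2 * localNorm (Hf y) (y - x))) ^ 2 *
          wFrob (Hf x) W := by
  intro y x hr
  set r := localNorm (Hf y) (y - x)
  have hr0 : 0 ≤ r := Real.sqrt_nonneg _
  have hloewner : (Hf x - (1 - r) ^ 2 • Hf y).PosSemidef := by
    simpa only [localNorm_sub_comm] using
      hsc.posSemidef_sub_smul (x := y) (y := x) (by rw [localNorm_sub_comm]; linarith)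
  have hcontract : (1 - r) ^ 2 * wFrob (Hf y) W ≤ wFrob (Hf x) W :=
    mul_wFrob_le_of_posSemidef_sub (sq_nonneg _) (hsc.1 y).posSemidef (hsc.1 x).posSemidef
      hloewner W
  have hfactor : 1 ≤ ((1 - r) / (1 - 2 * r)) ^ 2 * (1 - r) ^ 2 := by
    have h : 1 ≤ (1 - r) ^ 2 / (1 - 2 * r) := by
      rw [le_div_iff₀ (by linarith)]; nlinarith
    calc 1 ≤ ((1 - r) ^ 2 / (1 - 2 * r)) ^ 2 := one_le_pow₀ h
      _ = ((1 - r) / (1 - 2 * r)) ^ 2 * (1 - r) ^ 2 := by ring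
  have hW0 : 0 ≤ wFrob (Hf y) W := Real.sqrt_nonneg _
  calc wFrob (Hf y) W ≤ ((1 - r) / (1 - 2 * r)) ^ 2 * ((1 - r) ^ 2 * wFrob (Hf y) W) := by
        nlinarith
    _ ≤ _ := mul_le_mul_of_nonneg_left hcontract (sq_nonneg _)

/-- **Change of metric in the weighted Frobenius norm, self-concordant case (backward).** -/
theorem wfrob_change_of_norm_self_concordant'
    {d : ℕ} (f : Vec d → ℝ) (g : Vec d → Vec d) (Hf : Vec d → Matrix (Fin d) (Fin d) ℝ)
    (hfgH : IsGradHess f g Hf) (hsc : SelfConcordant Hf)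
    (W : Matrix (Fin d) (Fin d) ℝ) (hW : W.IsSymm) :
    ∀ y x : Vec d, localNorm (Hf y) (y - x) < 1 / 2 →
      wFrob (Hf y) W ≤
        ((1 - localNorm (Hf y) (y - x)) / (1 - 2 * localNorm (Hf y) (y - x))) ^ 2 *
          wFrob (Hf x) W :=
  wfrob_change_of_norm_self_concordant'_general Hf hsc W
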